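/- Let N ≥ 1 be an integer and 0 < λ ≤ Λ. Let w ∈ C¹([0, ∞)) ∩ C²((0, ∞)) satisfy w(0) = 1, w'(0) = 0, and w''(r) = M(−((N−1)/r)·m(w'(r)) − w(r)) for all r > 0. Then w is oscillatory: for every r > 0 there exists τ > r with w(τ) = 0. -/

import Mathlib

noncomputable def Mfun (lam Lam s : ℝ) : ℝ := if 0 < s then s / Lam else s / lam
noncomputable def mfun (lam Lam s : ℝ) : ℝ := if 0 < s then Lam * s else lam * s

noncomputable def D1 (u : ℝ → ℝ) : ℝ → ℝ := derivWithin u (Set.Icc 0 1)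
noncomputable def D2 (u : ℝ → ℝ) : ℝ → ℝ := derivWithin (D1 u) (Set.Ioc 0 1)

/-- A (possibly trivial) solution of the radial eigenvalue problem on the unit ball. -/
def RadialEigen (N : ℕ) (lam Lam μ : ℝ) (v : ℝ → ℝ) : Prop :=
  ContDiffOn ℝ 1 v (Set.Icc 0 1) ∧ ContDiffOn ℝ 2 v (Set.Ioc 0 1) ∧
  (∀ r ∈ Set.Ioc (0:ℝ) 1,
    D2 v r = Mfun lam Lam (-(((N:ℝ) - 1) / r) * mfun lam Lam (D1 v r) - μ * v r)) ∧
  D1 v 0 = 0 ∧ v 1 = 0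

def RadialIVPSol (N : ℕ) (lam Lam : ℝ) (w : ℝ → ℝ) : Prop :=
  ContDiffOn ℝ 1 w (Set.Ici 0) ∧ ContDiffOn ℝ 2 w (Set.Ioi 0) ∧
  w 0 = 1 ∧ derivWithin w (Set.Ici 0) 0 = 0 ∧
  ∀ r ∈ Set.Ioi (0:ℝ),
    deriv (deriv w) r = Mfun lam Lam (-(((N:ℝ) - 1) / r) * mfun lam Lam (deriv w r) - w r)

/-!
Where `w` keeps a sign, say `w > 0`, the equation gives
`w'' ≤ (Γ / r) |w'| - q w` with `Γ = (N - 1) Λ / λ` and `q = 1 / Λ`. As `Γ / r → 0`, the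
Riccati variable `ρ = -w' / w` eventually satisfies `ρ' ≥ (ρ² + q) / 2`, and such a `ρ` blows
up in finite time. The case `w < 0` is the same, because `-w` solves the equation with `λ` and
`Λ` exchanged.
-/

open Set Real

theorem false_of_mul_sq_add_sq_le_deriv {ρ ρ' : ℝ → ℝ} {R c s : ℝ} (hc : 0 < c) (hs : 0 < s)
    (hρ : ∀ r ≥ R, HasDerivAt ρ (ρ' r) r) (h : ∀ r ≥ R, c * (ρ r ^ 2 + s ^ 2) ≤ ρ' r) :
    False := by
  -- `arctan (ρ / s)` grows at rate at least `c s` but stays in `(-π/2, π/2)`.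
  have hθ : ∀ r ≥ R,
      HasDerivAt (fun r => arctan (ρ r / s)) (s * ρ' r / (ρ r ^ 2 + s ^ 2)) r := by
    intro r hr
    convert ((hρ r hr).div_const s).arctan using 1
    field_simp
    ring
  have hrate : ∀ r ∈ interior (Ici R), c * s ≤ deriv (fun r => arctan (ρ r / s)) r := by
    intro r hr
    rw [interior_Ici] at hr
    rw [(hθ r hr.le).deriv, le_div_iff₀ (by positivity)]
    nlinarith [h r hr.le]
  have hgrowth := (convex_Ici R).mul_sub_le_image_sub_of_le_deriv
    (fun r hr => (hθ r hr).continuousAt.continuousWithinAt)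
    (fun r hr => (hθ r (interior_subset hr)).differentiableAt.differentiableWithinAt) hrate
    R self_mem_Ici (R + π / (c * s))
    (le_add_of_nonneg_right (div_pos pi_pos (mul_pos hc hs)).le)
    (le_add_of_nonneg_right (div_pos pi_pos (mul_pos hc hs)).le)
  have hπ : c * s * (R + π / (c * s) - R) = π := by field_simp; ring
  linarith [arctan_lt_pi_div_two (ρ (R + π / (c * s)) / s), neg_pi_div_two_lt_arctan (ρ R / s)]

theorem exists_nonpos_of_deriv_deriv_le {u u' u'' : ℝ → ℝ} {r₀ Γ q : ℝ} (hΓ : 0 ≤ Γ)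
    (hq : 0 < q) (hu : ∀ r > r₀, HasDerivAt u (u' r) r)
    (hu' : ∀ r > r₀, HasDerivAt u' (u'' r) r)
    (h : ∀ r > r₀, 0 < u r → u'' r ≤ Γ / r * |u' r| - q * u r) :
    ∃ r > r₀, u r ≤ 0 := by
  by_contra! hpos
  set s := √q
  have hs : 0 < s := sqrt_pos.2 hq
  set R := max (r₀ + 1) (Γ / s + 1)
  have hR₀ : ∀ r ≥ R, r₀ < r := fun r hr => by linarith [le_max_left (r₀ + 1) (Γ / s + 1)]
  have hΓr : ∀ r ≥ R, Γ / r ≤ s := fun r hr => by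
    have hΓs : Γ / s < r := by linarith [le_max_right (r₀ + 1) (Γ / s + 1)]
    have hr : 0 < r := (div_nonneg hΓ hs.le).trans_lt hΓs
    rw [div_lt_iff₀ hs] at hΓs
    rw [div_le_iff₀ hr]
    linarith
  -- The logarithmic derivative `ρ = -u'/u` satisfies `ρ' = ρ² - u''/u ≥ ρ² - s|ρ| + s²`.
  refine false_of_mul_sq_add_sq_le_deriv (ρ := fun r => -u' r / u r) (R := R) (c := 1 / 2)
    (by norm_num) hs (fun r hr => ((hu' r (hR₀ r hr)).neg.div (hu r (hR₀ r hr))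
      (hpos r (hR₀ r hr)).ne')) fun r hr => ?_
  have hur := hpos r (hR₀ r hr)
  have hu''r : u'' r ≤ s * |u' r| - s ^ 2 * u r := by
    rw [sq_sqrt hq.le]
    nlinarith [h r (hR₀ r hr) hur, hΓr r hr, abs_nonneg (u' r)]
  rw [le_div_iff₀ (by positivity), div_pow, neg_sq]
  field_simp
  simp only [Pi.neg_apply]
  nlinarith [mul_le_mul_of_nonneg_left hu''r hur.le, sq_nonneg (|u' r| - s * u r), sq_abs (u' r)]

theorem Mfun_neg (a b t : ℝ) : Mfun a b (-t) = -Mfun b a t := by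
  unfold Mfun
  rcases lt_trichotomy t 0 with ht | rfl | ht
  · simp [ht, ht.not_gt, neg_div]
  · simp
  · simp [ht, (neg_neg_of_pos ht).not_gt, neg_div]

theorem mfun_neg (a b x : ℝ) : mfun a b (-x) = -mfun b a x := by
  unfold mfun
  rcases lt_trichotomy x 0 with hx | rfl | hx
  · simp [hx, hx.not_gt]
  · simp
  · simp [hx, (neg_neg_of_pos hx).not_gt]

theorem abs_mfun_le {a b : ℝ} (ha : 0 ≤ a) (hb : 0 ≤ b) (x : ℝ) :
    |mfun a b x| ≤ max a b * |x| := by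
  unfold mfun
  split_ifs
  · rw [abs_mul, abs_of_nonneg hb]; gcongr; exact le_max_right a b
  · rw [abs_mul, abs_of_nonneg ha]; gcongr; exact le_max_left a b

theorem Mfun_sub_le {a b p y : ℝ} (ha : 0 < a) (hb : 0 < b) (hp : 0 ≤ p) (hy : 0 ≤ y) :
    Mfun a b (p - y) ≤ p / min a b - y / max a b := by
  have hmin : 0 < min a b := lt_min ha hb
  unfold Mfun
  split_ifs
  · rw [sub_div]
    gcongr
    exacts [min_le_right a b, le_max_right a b]
  · rw [sub_div]
    gcongr
    exacts [min_le_left a b, le_max_left a b]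

theorem monotone_Mfun {a b : ℝ} (ha : 0 < a) (hb : 0 < b) : Monotone (Mfun a b) := by
  intro s t hst
  unfold Mfun
  split_ifs with hs ht ht
  · gcongr
  · linarith
  · exact (div_nonpos_of_nonpos_of_nonneg (not_lt.1 hs) ha.le).trans (div_pos ht hb).le
  · gcongr

theorem Mfun_neg_mul_mfun_sub_le {a b c x y : ℝ} (ha : 0 < a) (hb : 0 < b) (hc : 0 ≤ c)
    (hy : 0 ≤ y) :
    Mfun a b (-c * mfun a b x - y) ≤ c * (max a b / min a b) * |x| - y / max a b := by
  have hm : -c * mfun a b x ≤ c * (max a b * |x|) := by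
    rw [neg_mul, neg_le]
    nlinarith [neg_abs_le (mfun a b x), abs_mfun_le ha.le hb.le x]
  calc Mfun a b (-c * mfun a b x - y) ≤ Mfun a b (c * (max a b * |x|) - y) :=
        monotone_Mfun ha hb (by linarith)
    _ ≤ c * (max a b * |x|) / min a b - y / max a b :=
        Mfun_sub_le ha hb (by positivity) hy
    _ = c * (max a b / min a b) * |x| - y / max a b := by ring

theorem ContDiffOn.hasDerivAt_deriv_deriv {f : ℝ → ℝ} {s : Set ℝ} (hf : ContDiffOn ℝ 2 f s)
    (hs : IsOpen s) {x : ℝ} (hx : x ∈ s) :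
    HasDerivAt f (deriv f x) x ∧ HasDerivAt (deriv f) (deriv (deriv f) x) x :=
  ⟨((hf.differentiableOn two_ne_zero).differentiableAt (hs.mem_nhds hx)).hasDerivAt,
    (((hf.deriv_of_isOpen hs (by norm_num)).differentiableOn one_ne_zero).differentiableAt
      (hs.mem_nhds hx)).hasDerivAt⟩

/-- the solution of the radial initial value problem is oscillatory. -/
theorem stmt_14 (N : ℕ) (hN : 1 ≤ N) (lam Lam : ℝ) (hlam : 0 < lam) (hlL : lam ≤ Lam)
    (w : ℝ → ℝ) (hw : RadialIVPSol N lam Lam w) :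
    ∀ r > (0:ℝ), ∃ τ > r, w τ = 0 := by
  obtain ⟨-, hC2, -, -, hODE⟩ := hw
  have hLam : 0 < Lam := hlam.trans_le hlL
  have hd : ∀ r > 0, HasDerivAt w (deriv w r) r ∧ HasDerivAt (deriv w) (deriv (deriv w) r) r :=
    fun r hr => hC2.hasDerivAt_deriv_deriv isOpen_Ioi hr
  have hc : ∀ r > 0, 0 ≤ ((N : ℝ) - 1) / r := fun r hr =>
    div_nonneg (sub_nonneg.2 (by exact_mod_cast hN)) hr.le
  set Γ := ((N : ℝ) - 1) * (max lam Lam / min lam Lam)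
  have hΓ : 0 ≤ Γ := mul_nonneg (sub_nonneg.2 (by exact_mod_cast hN)) (by positivity)
  have hq : 0 < (max lam Lam)⁻¹ := by positivity
  intro r₀ hr₀
  obtain ⟨a, ha, hwa⟩ := exists_nonpos_of_deriv_deriv_le hΓ hq
    (fun r hr => (hd r (hr₀.trans hr)).1) (fun r hr => (hd r (hr₀.trans hr)).2)
    fun r hr hwr => by
      rw [hODE r (hr₀.trans hr)]
      exact (Mfun_neg_mul_mfun_sub_le hlam hLam (hc r (hr₀.trans hr)) hwr.le).trans_eq (by ring)
  obtain ⟨b, hb, hwb⟩ := exists_nonpos_of_deriv_deriv_le (u := fun r => -w r) hΓ hq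
    (fun r hr => (hd r (hr₀.trans hr)).1.neg) (fun r hr => (hd r (hr₀.trans hr)).2.neg)
    fun r hr hwr => by
      -- `-w` solves the same equation with `λ` and `Λ` exchanged.
      have := Mfun_neg_mul_mfun_sub_le hLam hlam (hc r (hr₀.trans hr)) hwr.le (x := -deriv w r)
      rw [mfun_neg, max_comm, min_comm] at this
      rw [hODE r (hr₀.trans hr), ← Mfun_neg]
      convert this.trans_eq ?_ using 2 <;> ring
  obtain ⟨τ, hτ, hwτ⟩ := intermediate_value_uIcc
    (hC2.continuousOn.mono fun x hx => hr₀.trans_le (le_min ha.le hb.le |>.trans hx.1))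
    (mem_uIcc.2 (Or.inl ⟨hwa, by linarith⟩) : (0 : ℝ) ∈ uIcc (w a) (w b))
  exact ⟨τ, (lt_min ha hb).trans_le hτ.1, hwτ⟩
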